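/- arXiv:math/0408292 — 7 statements merged into one kernel-verified Lean document; each statement's English description precedes it below -/
import Mathlib

section
/- For every even p ≥ 2 and every odd n ≥ p+2, there exists a simple graph on n vertices with one vertex of degree n−1 and n−1 vertices of degree p. -/
/-!
Write `n = m + 1` and `p = 2k + 2`. Since `m` is even, the circulant graph on `Fin m` with jumps
`±1, …, ±k, m/2` is `(p - 1)`-regular: it is the perfect matching `x ~ x + m/2` together with `k`
spanning cycles. Its cone, a new vertex joined to all `m` vertices, has one vertex of degree `m`
and `m` vertices of degree `p`.
-/

open SimpleGraph Finset

/-- The multiset of vertex degrees of a finite simple graph. -/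
def degMS {m : ℕ} (G : SimpleGraph (Fin m)) [DecidableRel G.Adj] : Multiset ℕ :=
  (Finset.univ : Finset (Fin m)).val.map fun v => G.degree v

/-- `G` contains `K_{p,1,1}` (complete tripartite with parts `p,1,1`) as a subgraph:
there are adjacent vertices `u, v` and `p` further vertices each adjacent to both. -/
def ContainsKp11 {V : Type*} (G : SimpleGraph V) (p : ℕ) : Prop :=
  ∃ u v : V, G.Adj u v ∧ ∃ s : Finset V, s.card = p ∧ u ∉ s ∧ v ∉ s ∧
    ∀ w ∈ s, G.Adj u w ∧ G.Adj v w

namespace SimpleGraph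

section Circulant

variable {G : Type*} [AddGroup G] [Fintype G] [DecidableEq G]

theorem degree_circulantGraph {s : Finset G} (hs0 : 0 ∉ s) (hneg : ∀ x ∈ s, -x ∈ s) (v : G) :
    (circulantGraph (s : Set G)).degree v = #s := by
  have hnbr : (circulantGraph (s : Set G)).neighborFinset v = s.image (· + v) := by
    ext u
    simp only [mem_neighborFinset, circulantGraph_adj, mem_coe, mem_image]
    constructor
    · rintro ⟨-, h | h⟩
      · exact ⟨u - v, by simpa using hneg _ h, sub_add_cancel u v⟩
      · exact ⟨u - v, h, sub_add_cancel u v⟩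
    · rintro ⟨x, hx, rfl⟩
      exact ⟨fun h => hs0 (add_eq_right.mp h.symm ▸ hx), Or.inr (by simpa using hx)⟩
  rw [← card_neighborFinset_eq_degree, hnbr, card_image_of_injective _ (add_left_injective v)]

end Circulant

section Cone

variable {V : Type*} (G : SimpleGraph V)

def cone : SimpleGraph (Option V) where
  Adj
    | some a, some b => G.Adj a b
    | none, some _ | some _, none => True
    | none, none => False
  symm := ⟨by rintro (_ | a) (_ | b) h <;> simp_all [G.adj_comm]⟩
  loopless := ⟨by rintro (_ | a) h <;> simp_all⟩

instance [DecidableRel G.Adj] : DecidableRel G.cone.Adj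
  | some a, some b => inferInstanceAs (Decidable (G.Adj a b))
  | none, some _ | some _, none => inferInstanceAs (Decidable True)
  | none, none => inferInstanceAs (Decidable False)

@[simp] lemma cone_adj_some_some {a b : V} : G.cone.Adj (some a) (some b) ↔ G.Adj a b := Iff.rfl

@[simp] lemma cone_adj_none_some {a : V} : G.cone.Adj none (some a) := trivial

@[simp] lemma cone_adj_some_none {a : V} : G.cone.Adj (some a) none := trivial

lemma isUniversal_cone_none : G.cone.IsUniversal none := by
  rintro (_ | a) h <;> simp_all

variable [Fintype V] [DecidableRel G.Adj]

lemma degree_cone_none : G.cone.degree none = Fintype.card V := by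
  rw [(degree_eq_card_sub_one _ _).mpr (isUniversal_cone_none G), Fintype.card_option,
    Nat.add_sub_cancel]

lemma neighborFinset_cone_some (v : V) :
    G.cone.neighborFinset (some v) = insertNone (G.neighborFinset v) := by
  ext (_ | a) <;> simp

lemma degree_cone_some (v : V) : G.cone.degree (some v) = G.degree v + 1 := by
  rw [← card_neighborFinset_eq_degree, neighborFinset_cone_some, card_insertNone,
    card_neighborFinset_eq_degree]

lemma map_degree_cone {d : ℕ} (hG : G.IsRegularOfDegree d) :
    ((univ : Finset (Option V)).val.map fun v => G.cone.degree v) =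
      Fintype.card V ::ₘ Multiset.replicate (Fintype.card V) (d + 1) := by
  rw [univ_option]
  change (none ::ₘ (univ : Finset V).val.map some).map _ = _
  simp [Multiset.map_map, degree_cone_none, degree_cone_some, hG.degree_eq]

end Cone

end SimpleGraph

/-- The jumps `±1, …, ±k` and `m / 2`; the negative jumps `-j` are the `x` with `x = m - j`. -/
def jumpSet (m k : ℕ) : Finset (Fin m) :=
  univ.filter fun x => 0 < (x : ℕ) ∧ ((x : ℕ) ≤ k ∨ m ≤ x + k ∨ 2 * x = m)

section JumpSet

variable {m k : ℕ}

lemma zero_notMem_jumpSet [NeZero m] : (0 : Fin m) ∉ jumpSet m k := by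
  simp [jumpSet]

lemma neg_mem_jumpSet [NeZero m] (hm : Even m) {x : Fin m} (hx : x ∈ jumpSet m k) :
    -x ∈ jumpSet m k := by
  obtain ⟨q, rfl⟩ := hm
  simp only [jumpSet, mem_filter, mem_univ, true_and, Fin.val_neg] at hx ⊢
  split_ifs with h
  · simp [h] at hx
  · omega

lemma card_jumpSet (hm : Even m) (hk : 2 * k + 2 ≤ m) : #(jumpSet m k) = 2 * k + 1 := by
  obtain ⟨q, rfl⟩ := hm
  have hval : (jumpSet (q + q) k).map Fin.valEmbedding =
      Icc 1 k ∪ Icc (q + q - k) (q + q - 1) ∪ {q} := by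
    ext a
    simp only [jumpSet, mem_map, mem_filter, mem_univ, true_and, Fin.valEmbedding_apply,
      Fin.exists_iff, mem_union, mem_Icc, mem_singleton]
    constructor
    · rintro ⟨a, ha, h, rfl⟩
      omega
    · intro h
      exact ⟨a, by omega, by omega, rfl⟩
  rw [← card_map, hval, card_union_of_disjoint, card_union_of_disjoint, Nat.card_Icc,
    Nat.card_Icc, card_singleton]
  · omega
  all_goals simp only [Finset.disjoint_left, mem_union, mem_Icc, mem_singleton]; omega

lemma isRegularOfDegree_circulantGraph_jumpSet [NeZero m] (hm : Even m) (hk : 2 * k + 2 ≤ m) :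
    (circulantGraph (jumpSet m k : Set (Fin m))).IsRegularOfDegree (2 * k + 1) := fun v => by
  rw [degree_circulantGraph zero_notMem_jumpSet (fun _ => neg_mem_jumpSet hm) v,
    card_jumpSet hm hk]

end JumpSet

lemma degMS_comap_equiv {n : ℕ} {W : Type*} [Fintype W] (G : SimpleGraph W) [DecidableRel G.Adj]
    (e : Fin n ≃ W) : degMS (G.comap e) = (univ : Finset W).val.map fun w => G.degree w := by
  have hdeg (u : Fin n) : (G.comap e).degree u = G.degree (e u) :=
    ((Iso.comap e G).degree_eq u).symm
  rw [← univ_map_equiv_to_embedding e, map_val, Multiset.map_map]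
  simp only [degMS, hdeg, Function.comp_def, Equiv.coe_toEmbedding]

theorem stmt_5 (p n : ℕ) (heven : Even p) (hp : 2 ≤ p) (hodd : Odd n) (hn : p + 2 ≤ n) :
    ∃ (H : SimpleGraph (Fin n)) (_ : DecidableRel H.Adj),
      degMS H = (n - 1) ::ₘ Multiset.replicate (n - 1) p := by
  obtain ⟨k, rfl⟩ : ∃ k, p = 2 * k + 2 := ⟨p / 2 - 1, by obtain ⟨t, ht⟩ := heven; omega⟩
  obtain ⟨m, rfl⟩ : ∃ m, n = m + 1 := ⟨n - 1, by obtain ⟨t, ht⟩ := hodd; omega⟩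
  have hm : Even m := by simpa [Nat.odd_add_one] using hodd
  have : NeZero m := ⟨by omega⟩
  let G := circulantGraph (jumpSet m k : Set (Fin m))
  have hG : G.IsRegularOfDegree (2 * k + 1) :=
    isRegularOfDegree_circulantGraph_jumpSet hm (by omega)
  refine ⟨G.cone.comap (finSuccEquiv m), inferInstance, ?_⟩
  rw [degMS_comap_equiv, map_degree_cone G hG, Fintype.card_fin, Nat.add_sub_cancel]
end

section
/- For all p ≥ 1 and n ≥ p+2, σ(K_{p,1,1}, n) ≥ 2·⌊((p+1)(n−1)+2)/2⌋, i.e., there exists a graphical sequence S of length n with sum σ(S) = 2·⌊((p+1)(n−1)+2)/2⌋ − 2 that is not potentially K_{p,1,1}-graphic. -/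
open SimpleGraph Finset

theorem ZMod.natCast_ne_zero_of_lt {m i : ℕ} (h0 : 0 < i) (h : i < m) : (i : ZMod m) ≠ 0 := by
  rw [Ne, ZMod.natCast_eq_zero_iff]
  exact Nat.not_dvd_of_pos_of_lt h0 h

namespace SimpleGraph

variable {V : Type*}

theorem degree_sup_of_disjoint {G₁ G₂ : SimpleGraph V} (h : Disjoint G₁ G₂) (v : V)
    [Fintype ((G₁ ⊔ G₂).neighborSet v)] [Fintype (G₁.neighborSet v)]
    [Fintype (G₂.neighborSet v)] :
    (G₁ ⊔ G₂).degree v = G₁.degree v + G₂.degree v := by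
  rw [← card_neighborFinset_eq_degree, neighborFinset_sup_of_disjoint v h, card_disjUnion]
  rfl

theorem sum_degrees_eq_of_nearlyRegular [Fintype V] [DecidableEq V] (G : SimpleGraph V)
    [DecidableRel G.Adj] {k : ℕ} (v₀ : V) (hle : ∀ v, G.degree v ≤ k)
    (hge : ∀ v, k ≤ G.degree v + if v = v₀ then 1 else 0) :
    ∑ v, G.degree v = 2 * (k * Fintype.card V / 2) := by
  have hupper : ∑ v, G.degree v ≤ Fintype.card V * k := by
    simpa using sum_le_card_nsmul univ _ k fun v _ => hle v
  have hlower : Fintype.card V * k ≤ ∑ v, G.degree v + 1 := by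
    simpa [sum_add_distrib] using sum_le_sum fun v (_ : v ∈ univ) => hge v
  have := G.sum_degrees_eq_twice_card_edges
  rw [mul_comm k]
  omega

section Circulant

variable {G : Type*} [AddCommGroup G]

theorem degree_circulantGraph_s8 [DecidableEq G] (D : Finset G)
    (hD : ∀ d ∈ D, ∀ d' ∈ D, d + d' ≠ 0) (x : G)
    [Fintype ((circulantGraph (D : Set G)).neighborSet x)] :
    (circulantGraph (D : Set G)).degree x = 2 * #D := by
  have hne : ∀ d ∈ D, d ≠ 0 := fun d hd h => hD d hd d hd (by simp [h])
  have hdisj : Disjoint (D.image (x - ·)) (D.image (x + ·)) := by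
    simp only [Finset.disjoint_left, mem_image, not_exists, not_and]
    rintro _ ⟨d, hd, rfl⟩ d' hd' h
    exact hD d hd d' hd' (by rw [show d + d' = x + d' - (x - d) by abel, h, sub_self])
  have hN : (circulantGraph (D : Set G)).neighborFinset x =
      D.image (x - ·) ∪ D.image (x + ·) := by
    ext y
    simp only [mem_neighborFinset, circulantGraph_adj, mem_coe, mem_union, mem_image]
    constructor
    · rintro ⟨-, h | h⟩
      · exact Or.inl ⟨x - y, h, by abel⟩
      · exact Or.inr ⟨y - x, h, by abel⟩
    · rintro (⟨d, hd, rfl⟩ | ⟨d, hd, rfl⟩)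
      · exact ⟨fun h => hne d hd (sub_eq_self.mp h.symm), Or.inl (by simpa using hd)⟩
      · exact ⟨by simpa using hne d hd, Or.inr (by simpa using hd)⟩
  rw [← card_neighborFinset_eq_degree, hN, card_union_of_disjoint hdisj,
    card_image_of_injective _ (sub_right_injective (b := x)),
    card_image_of_injective _ (add_right_injective x), two_mul]

theorem disjoint_circulantGraph {s t : Set G} (h : ∀ d ∈ s, d ∉ t ∧ -d ∉ t) :
    Disjoint (circulantGraph s) (circulantGraph t) := by
  rw [disjoint_iff_inf_le]
  rintro x y ⟨⟨-, hs⟩, ⟨-, ht⟩⟩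
  rcases hs with hs | hs <;> rcases ht with ht | ht
  · exact (h _ hs).1 ht
  · exact (h _ hs).2 (by simpa using ht)
  · exact (h _ hs).2 (by simpa using ht)
  · exact (h _ hs).1 ht

theorem degree_circulantGraph_Icc {m a b : ℕ} (ha : 1 ≤ a) (hb : 2 * b < m) (x : ZMod m)
    [Fintype ((circulantGraph (((Icc a b).image (↑) : Finset (ZMod m)) : Set (ZMod m))).neighborSet
      x)] :
    (circulantGraph (((Icc a b).image (↑) : Finset (ZMod m)) : Set (ZMod m))).degree x =
      2 * (b + 1 - a) := by
  have hval : ∀ j ∈ Icc a b, (j : ZMod m).val = j := fun j hj =>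
    ZMod.val_natCast_of_lt (by simp only [mem_Icc] at hj; omega)
  rw [degree_circulantGraph_s8, card_image_of_injOn, Nat.card_Icc]
  · intro j hj j' hj' h
    rw [← hval j hj, ← hval j' hj', h]
  · simp only [mem_image, mem_Icc]
    rintro _ ⟨j, hj, rfl⟩ _ ⟨j', hj', rfl⟩
    rw [← Nat.cast_add]
    exact ZMod.natCast_ne_zero_of_lt (by omega) (by omega)

end Circulant

section Pairing

variable {m : ℕ}

/-- The matching `{0, 1}, {2, 3}, …` on `ZMod m`, perfect when `m` is even. -/
def pairingGraph (m : ℕ) : SimpleGraph (ZMod m) where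
  Adj x y := x ≠ y ∧ x.val / 2 = y.val / 2
  symm := ⟨fun _ _ h => ⟨h.1.symm, h.2.symm⟩⟩
  loopless := ⟨fun _ h => h.1 rfl⟩

@[simp]
theorem pairingGraph_adj {x y : ZMod m} :
    (pairingGraph m).Adj x y ↔ x ≠ y ∧ x.val / 2 = y.val / 2 := Iff.rfl

theorem pairingGraph_le_circulantGraph_one [NeZero m] :
    pairingGraph m ≤ circulantGraph {1} := by
  rintro x y ⟨hne, hxy⟩
  have hval : x.val = y.val + 1 ∨ y.val = x.val + 1 := by
    have := (ZMod.val_injective m).ne hne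
    omega
  refine ⟨hne, ?_⟩
  rw [← ZMod.natCast_zmod_val x, ← ZMod.natCast_zmod_val y]
  rcases hval with h | h <;> rw [h] <;> simp

theorem degree_pairingGraph_le_one [NeZero m] (x : ZMod m)
    [Fintype ((pairingGraph m).neighborSet x)] : (pairingGraph m).degree x ≤ 1 := by
  rw [← card_neighborFinset_eq_degree, Finset.card_le_one]
  simp only [mem_neighborFinset, pairingGraph_adj]
  rintro y ⟨hxy, hy⟩ z ⟨hxz, hz⟩
  have := (ZMod.val_injective m).ne hxy
  have := (ZMod.val_injective m).ne hxz
  exact ZMod.val_injective m (by omega)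

theorem one_le_degree_pairingGraph [NeZero m] {x : ZMod m} (hx : x ≠ -1)
    [Fintype ((pairingGraph m).neighborSet x)] : 1 ≤ (pairingGraph m).degree x := by
  have hlt : x.val + 1 < m := by
    by_contra! h
    have hm : ((x.val + 1 : ℕ) : ZMod m) = 0 := by
      rw [show x.val + 1 = m by have := x.val_lt; omega, ZMod.natCast_self]
    push_cast at hm
    exact hx (eq_neg_of_add_eq_zero_left (by rwa [ZMod.natCast_zmod_val] at hm))
  -- the other element of the pair `{2i, 2i + 1}` containing `x`
  set y : ZMod m := ((2 * (x.val / 2) + 1 - x.val % 2 : ℕ) : ZMod m)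
  have hy : y.val = 2 * (x.val / 2) + 1 - x.val % 2 := ZMod.val_natCast_of_lt (by omega)
  rw [← card_neighborFinset_eq_degree, Nat.one_le_iff_ne_zero, Ne, card_eq_zero,
    ← Ne, ← nonempty_iff_ne_empty]
  refine ⟨y, (mem_neighborFinset _ _ _).mpr (pairingGraph_adj.mpr ⟨fun h => ?_, by omega⟩)⟩
  rw [h] at hy
  omega

end Pairing

theorem exists_nearlyRegular_zmod (k m : ℕ) [NeZero m] (h : k + 2 ≤ m) :
    ∃ (H : SimpleGraph (ZMod m)) (_ : DecidableRel H.Adj),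
      (∀ x, H.degree x ≤ k) ∧ ∀ x, k ≤ H.degree x + if x = -1 then 1 else 0 := by
  classical
  rcases Nat.even_or_odd' k with ⟨t, rfl | rfl⟩
  · refine ⟨circulantGraph (((Icc 1 t).image (↑) : Finset (ZMod m)) : Set (ZMod m)),
      inferInstance, fun x => ?_, fun x => ?_⟩ <;>
    · rw [degree_circulantGraph_Icc le_rfl (by omega)]
      omega
  · set C := circulantGraph (((Icc 2 (t + 1)).image (↑) : Finset (ZMod m)) : Set (ZMod m))
    have hdisj : Disjoint C (pairingGraph m) := by
      refine (disjoint_circulantGraph ?_).mono_right pairingGraph_le_circulantGraph_one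
      simp only [coe_image, Set.mem_image, mem_coe, mem_Icc, Set.mem_singleton_iff]
      rintro _ ⟨j, hj, rfl⟩
      constructor
      · intro hj1
        refine ZMod.natCast_ne_zero_of_lt (m := m) (i := j - 1) (by omega) (by omega) ?_
        rw [Nat.cast_sub (by omega), hj1, Nat.cast_one, sub_self]
      · intro hj1
        refine ZMod.natCast_ne_zero_of_lt (m := m) (i := j + 1) (by omega) (by omega) ?_
        rw [Nat.cast_add, Nat.cast_one, ← hj1, add_neg_cancel]
    refine ⟨C ⊔ pairingGraph m, inferInstance, fun x => ?_, fun x => ?_⟩ <;>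
      rw [degree_sup_of_disjoint hdisj, degree_circulantGraph_Icc one_le_two (by omega)]
    · have := degree_pairingGraph_le_one x
      omega
    · split_ifs with hx
      · omega
      · have := one_le_degree_pairingGraph hx
        omega

def apex (H : SimpleGraph V) : SimpleGraph (Option V) where
  Adj
    | some x, some y => H.Adj x y
    | none, none => False
    | _, _ => True
  symm := ⟨by rintro (_ | x) (_ | y) h <;> simp_all [H.adj_comm]⟩
  loopless := ⟨by rintro (_ | x) h <;> simp_all⟩

theorem degree_apex_none [Fintype V] (H : SimpleGraph V)
    [Fintype ((apex H).neighborSet none)] : (apex H).degree none = Fintype.card V := by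
  have : (apex H).neighborFinset none = univ.map Function.Embedding.some := by
    ext (_ | y) <;> rw [mem_neighborFinset] <;> simp [apex]
  rw [← card_neighborFinset_eq_degree, this, card_map, card_univ]

theorem degree_apex_some (H : SimpleGraph V) (x : V) [Fintype (H.neighborSet x)]
    [Fintype ((apex H).neighborSet (some x))] : (apex H).degree (some x) = H.degree x + 1 := by
  have : (apex H).neighborFinset (some x) = insertNone (H.neighborFinset x) := by
    ext (_ | y) <;> rw [mem_neighborFinset] <;> simp [apex]
  rw [← card_neighborFinset_eq_degree, this, card_insertNone, card_neighborFinset_eq_degree]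

theorem card_filter_le_degree_apex_le_one [Fintype V] (H : SimpleGraph V)
    [DecidableRel H.Adj] [DecidableRel (apex H).Adj] {k : ℕ} (hH : ∀ x, H.degree x ≤ k) :
    #{a | k + 2 ≤ (apex H).degree a} ≤ 1 := by
  refine (card_le_card (t := {none}) fun a ha => ?_).trans (card_singleton _).le
  rcases a with _ | x
  · exact mem_singleton_self _
  · have := (mem_filter.mp ha).2
    rw [degree_apex_some] at this
    exact absurd (hH x) (by omega)

end SimpleGraph

theorem ContainsKp11.two_le_card_degree_ge {V : Type*} [Fintype V] [DecidableEq V]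
    {G : SimpleGraph V} [DecidableRel G.Adj] {p : ℕ} (h : ContainsKp11 G p) :
    2 ≤ #{v | p + 1 ≤ G.degree v} := by
  obtain ⟨u, v, huv, s, hs, hus, hvs, hsw⟩ := h
  have hdeg (a b : V) (hab : G.Adj a b) (hbs : b ∉ s) (has : ∀ w ∈ s, G.Adj a w) :
      p + 1 ≤ G.degree a := by
    rw [← card_neighborFinset_eq_degree, ← hs, ← card_insert_of_notMem hbs]
    refine card_le_card fun w hw => ?_
    rw [mem_neighborFinset]
    rcases mem_insert.mp hw with rfl | hw
    exacts [hab, has w hw]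
  calc 2 = #{u, v} := (card_pair huv.ne).symm
    _ ≤ _ := by
      refine card_le_card fun w hw => ?_
      rw [mem_filter]
      rcases mem_insert.mp hw with rfl | hw
      · exact ⟨mem_univ _, hdeg w v huv hvs fun x hx => (hsw x hx).1⟩
      · rw [mem_singleton.mp hw]
        exact ⟨mem_univ _, hdeg v u huv.symm hus fun x hx => (hsw x hx).2⟩

theorem Multiset.countP_map_univ_val {α β : Type*} [Fintype α] (f : α → β) (q : β → Prop)
    [DecidablePred q] : (univ.val.map f).countP q = #{x | q (f x)} := by
  rw [Multiset.countP_map]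
  rfl

theorem exists_degMS_eq_map_degree {V : Type*} [Fintype V] (G : SimpleGraph V)
    [DecidableRel G.Adj] {n : ℕ}
    (hV : Fintype.card V = n) :
    ∃ (G' : SimpleGraph (Fin n)) (_ : DecidableRel G'.Adj),
      degMS G' = univ.val.map fun v => G.degree v := by
  classical
  let e := Fintype.equivFinOfCardEq hV
  refine ⟨G.map e.toEmbedding, inferInstance, ?_⟩
  rw [degMS, ← Multiset.map_univ_val_equiv e, Multiset.map_map]
  exact congrArg (univ.val.map ·) (funext fun v => (Iso.map e G).degree_eq v)

theorem stmt_8 (p n : ℕ) (hp : 1 ≤ p) (hn : p + 2 ≤ n) :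
    ∃ S : Multiset ℕ, S.card = n ∧
      (∃ (G : SimpleGraph (Fin n)) (_ : DecidableRel G.Adj), degMS G = S) ∧
      S.sum = 2 * (((p + 1) * (n - 1) + 2) / 2) - 2 ∧
      ¬ ∃ (G : SimpleGraph (Fin n)) (_ : DecidableRel G.Adj),
          degMS G = S ∧ ContainsKp11 G p := by
  classical
  obtain ⟨k, rfl⟩ : ∃ k, p = k + 1 := ⟨p - 1, by omega⟩
  obtain ⟨m, rfl⟩ : ∃ m, n = m + 1 := ⟨n - 1, by omega⟩
  have : NeZero m := ⟨by omega⟩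
  obtain ⟨H, _, hle, hge⟩ := exists_nearlyRegular_zmod k m (by omega)
  have hcard : Fintype.card (Option (ZMod m)) = m + 1 := by simp
  refine ⟨univ.val.map fun a => (apex H).degree a, by simp, exists_degMS_eq_map_degree _ hcard,
    ?_, ?_⟩
  · have hsum := sum_degrees_eq_of_nearlyRegular H (-1) hle hge
    rw [ZMod.card] at hsum
    rw [← sum_eq_multiset_sum, Fintype.sum_option, degree_apex_none, ZMod.card]
    simp only [degree_apex_some, sum_add_distrib, hsum, sum_const, card_univ, ZMod.card,
      smul_eq_mul, mul_one]
    have : (k + 1 + 1) * (m + 1 - 1) = k * m + 2 * m := by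
      rw [Nat.add_sub_cancel]
      ring
    rw [this]
    omega
  · rintro ⟨G, _, hG, hK⟩
    have htwo := hK.two_le_card_degree_ge
    have hone := card_filter_le_degree_apex_le_one H hle
    rw [← Multiset.countP_map_univ_val] at htwo hone
    rw [← hG] at hone
    exact absurd (htwo.trans hone) (by omega)
end

section
/- Every simple graph on 5 vertices with at least 9 edges contains K_{3,1,1} as a subgraph. -/
open SimpleGraph Finset

theorem stmt_9 (G : SimpleGraph (Fin 5)) [DecidableRel G.Adj]
    (h : 9 ≤ G.edgeFinset.card) : ContainsKp11 G 3 := by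
  classical
  have hsub : G.edgeFinset ⊆ (⊤ : SimpleGraph (Fin 5)).edgeFinset :=
    SimpleGraph.edgeFinset_subset_edgeFinset.mpr le_top
  have htop : (⊤ : SimpleGraph (Fin 5)).edgeFinset.card = 10 := by decide
  set C := (⊤ : SimpleGraph (Fin 5)).edgeFinset \ G.edgeFinset with hCdef
  have hCcard : C.card ≤ 1 := by
    rw [hCdef, Finset.card_sdiff_of_subset hsub, htop]
    omega
  have key : ∀ x y : Fin 5, x ≠ y → s(x, y) ∉ C → G.Adj x y := by
    intro x y hxy hC
    have hmem : s(x, y) ∈ (⊤ : SimpleGraph (Fin 5)).edgeFinset := by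
      simp [SimpleGraph.mem_edgeFinset, hxy]
    rw [hCdef, Finset.mem_sdiff] at hC
    push_neg at hC
    exact (SimpleGraph.mem_edgeFinset).mp (hC hmem)
  by_cases hCe : C = ∅
  · refine ⟨0, 1, key 0 1 (by decide) (by simp [hCe]), {2, 3, 4}, by decide, by decide,
      by decide, ?_⟩
    intro w hw
    fin_cases hw <;>
      exact ⟨key _ _ (by decide) (by simp [hCe]), key _ _ (by decide) (by simp [hCe])⟩
  · obtain ⟨e, he⟩ := Finset.nonempty_of_ne_empty hCe
    have hone : ∀ f ∈ C, f = e := fun f hf =>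
      Finset.card_le_one.mp hCcard f hf e he
    have key' : ∀ x y : Fin 5, x ≠ y → s(x, y) ≠ e → G.Adj x y := by
      intro x y hxy hne
      exact key x y hxy (fun hmem => hne (hone _ hmem))
    obtain ⟨⟨a, b⟩, rfl⟩ := e.exists_rep
    have hab : a ≠ b := by
      have := (Finset.mem_sdiff.mp he).1
      rw [SimpleGraph.mem_edgeFinset] at this
      simpa using this
    -- pick u, v outside {a, b}
    have htcard : ((univ : Finset (Fin 5)) \ {a, b}).card = 3 := by
      rw [Finset.card_sdiff_of_subset (Finset.subset_univ _), Finset.card_pair hab]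
      simp
    obtain ⟨u, hu⟩ := Finset.card_pos.mp (by omega : 0 < ((univ : Finset (Fin 5)) \ {a, b}).card)
    obtain ⟨v, hv⟩ := Finset.card_pos.mp
      (by rw [Finset.card_erase_of_mem hu, htcard]; norm_num :
        0 < (((univ : Finset (Fin 5)) \ {a, b}).erase u).card)
    have hvu : v ≠ u := (Finset.mem_erase.mp hv).1
    have hv' : v ∈ (univ : Finset (Fin 5)) \ {a, b} := (Finset.mem_erase.mp hv).2
    have hua : u ≠ a ∧ u ≠ b := by
      have := (Finset.mem_sdiff.mp hu).2; simp at this; exact this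
    have hva : v ≠ a ∧ v ≠ b := by
      have := (Finset.mem_sdiff.mp hv').2; simp at this; exact this
    have huv : u ≠ v := hvu.symm
    have hne_ab : ∀ x y : Fin 5, x ≠ a → x ≠ b → (s(x, y) : Sym2 (Fin 5)) ≠ Quot.mk _ (a, b) := by
      intro x y hxa hxb hq
      have : s(x, y) = s(a, b) := hq
      rw [Sym2.eq_iff] at this
      rcases this with ⟨h1, _⟩ | ⟨h1, _⟩
      · exact hxa h1
      · exact hxb h1
    refine ⟨u, v, key' u v huv (hne_ab u v hua.1 hua.2), (univ : Finset (Fin 5)) \ {u, v}, ?_,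
      by simp, by simp, ?_⟩
    · rw [Finset.card_sdiff_of_subset (Finset.subset_univ _), Finset.card_pair huv]; simp
    · intro w hw
      have hw' : w ≠ u ∧ w ≠ v := by
        have := (Finset.mem_sdiff.mp hw).2; simp at this; exact this
      exact ⟨key' u w (Ne.symm hw'.1) (hne_ab u w hua.1 hua.2),
        key' v w (Ne.symm hw'.2) (hne_ab v w hva.1 hva.2)⟩
end

section
/- The sequence (4, 4, 4, 4, 4, 4) is graphical, but no simple graph on 6 vertices in which every vertex has degree 4 contains K_{3,1,1} as a subgraph. -/
open SimpleGraph Finset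

theorem stmt_10 :
    (∃ (G : SimpleGraph (Fin 6)) (_ : DecidableRel G.Adj), ∀ v, G.degree v = 4) ∧
    ∀ (G : SimpleGraph (Fin 6)) (inst : DecidableRel G.Adj),
      (∀ v, G.degree v = 4) → ¬ ContainsKp11 G 3 := by
  constructor
  · refine ⟨SimpleGraph.fromRel (fun u v : Fin 6 => (u : ℕ) + (v : ℕ) ≠ 5),
      by unfold SimpleGraph.fromRel; infer_instance, by decide⟩
  · rintro G inst hdeg ⟨u, v, huv, s, hcard, hus, hvs, hadj⟩
    have hvns : v ∉ s := hvs
    have hins : u ∉ insert v s := by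
      simp only [Finset.mem_insert]
      rintro (rfl | h)
      · exact G.irrefl huv
      · exact hus h
    have hT : (insert u (insert v s)).card = 5 := by
      rw [Finset.card_insert_of_notMem hins, Finset.card_insert_of_notMem hvns, hcard]
    -- there is a vertex outside T
    obtain ⟨x, hx⟩ : ∃ x : Fin 6, x ∉ insert u (insert v s) := by
      by_contra h
      push_neg at h
      have : (Finset.univ : Finset (Fin 6)) ⊆ insert u (insert v s) := fun y _ => h y
      have := Finset.card_le_card this
      simp [hT] at this
    have hxu : x ≠ u := by rintro rfl; exact hx (Finset.mem_insert_self _ _)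
    have hxv : x ≠ v := by
      rintro rfl
      exact hx (Finset.mem_insert_of_mem (Finset.mem_insert_self _ _))
    -- N(u) = insert v s
    have hNu : G.neighborFinset u = insert v s := by
      symm
      apply Finset.eq_of_subset_of_card_le
      · intro w hw
        rw [SimpleGraph.mem_neighborFinset]
        rcases Finset.mem_insert.mp hw with rfl | hw
        · exact huv
        · exact (hadj w hw).1
      · rw [Finset.card_insert_of_notMem hvns, hcard]
        rw [G.card_neighborFinset_eq_degree, hdeg u]
    have hNv : G.neighborFinset v = insert u s := by
      symm
      apply Finset.eq_of_subset_of_card_le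
      · intro w hw
        rw [SimpleGraph.mem_neighborFinset]
        rcases Finset.mem_insert.mp hw with rfl | hw
        · exact huv.symm
        · exact (hadj w hw).2
      · rw [Finset.card_insert_of_notMem hus, hcard]
        rw [G.card_neighborFinset_eq_degree, hdeg v]
    have hxu' : ¬ G.Adj u x := by
      intro h
      have : x ∈ insert v s := by rw [← hNu]; exact (SimpleGraph.mem_neighborFinset _ _ _).mpr h
      exact hx (Finset.mem_insert_of_mem this)
    have hxv' : ¬ G.Adj v x := by
      intro h
      have : x ∈ insert u s := by rw [← hNv]; exact (SimpleGraph.mem_neighborFinset _ _ _).mpr h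
      rcases Finset.mem_insert.mp this with rfl | h'
      · exact hx (Finset.mem_insert_self _ _)
      · exact hx (Finset.mem_insert_of_mem (Finset.mem_insert_of_mem h'))
    -- N(x) avoids u, v, x
    have hsub : G.neighborFinset x ⊆ (Finset.univ : Finset (Fin 6)) \ {u, v, x} := by
      intro y hy
      rw [SimpleGraph.mem_neighborFinset] at hy
      simp only [Finset.mem_sdiff, Finset.mem_univ, true_and, Finset.mem_insert,
        Finset.mem_singleton]
      push_neg
      refine ⟨?_, ?_, ?_⟩
      · rintro rfl; exact hxu' hy.symm
      · rintro rfl; exact hxv' hy.symm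
      · rintro rfl; exact G.irrefl hy
    have hcard3 : ((Finset.univ : Finset (Fin 6)) \ {u, v, x}).card = 3 := by
      rw [Finset.card_sdiff_of_subset (by intro y _; exact Finset.mem_univ y)]
      have : ({u, v, x} : Finset (Fin 6)).card = 3 := by
        rw [Finset.card_insert_of_notMem (by simp [huv.ne, Ne.symm hxu]),
          Finset.card_insert_of_notMem (by simp [Ne.symm hxv])]
        rfl
      simp [this]
    have := Finset.card_le_card hsub
    rw [hcard3] at this
    have hdx : (G.neighborFinset x).card = 4 := by
      rw [G.card_neighborFinset_eq_degree]; exact hdeg x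
    omega
end

section
/- Every 6-term graphical sequence S with σ(S) ≥ 22 either has a realization containing K_{3,1,1} as a subgraph or equals (4, 4, 4, 4, 4, 4). -/
open SimpleGraph Finset

/-! ### Encoding graphs on `Fin 6` by their 15 edge indicators -/

def pidxN (u v : ℕ) : ℕ := max u v * (max u v - 1) / 2 + min u v

def pidx (u v : Fin 6) : Fin 15 := ⟨pidxN u.val v.val % 15, Nat.mod_lt _ (by norm_num)⟩

lemma pidx_symm : ∀ u v : Fin 6, pidx u v = pidx v u := by decide

def graphOf (g : Fin 15 → Bool) : SimpleGraph (Fin 6) where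
  Adj u v := u ≠ v ∧ g (pidx u v) = true
  symm := ⟨by intro u v ⟨h1, h2⟩; exact ⟨h1.symm, pidx_symm v u ▸ h2⟩⟩
  loopless := ⟨by intro u ⟨h1, _⟩; exact h1 rfl⟩

instance graphOfDec (g : Fin 15 → Bool) : DecidableRel (graphOf g).Adj :=
  fun _ _ => instDecidableAnd

def prs : List (Fin 6 × Fin 6) :=
  [(0,1),(0,2),(1,2),(0,3),(1,3),(2,3),(0,4),(1,4),(2,4),(3,4),(0,5),(1,5),(2,5),(3,5),(4,5)]

def pr (i : Fin 15) : Fin 6 × Fin 6 := prs.getD i.val (0,1)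

lemma pr_pidx : ∀ u v : Fin 6, u ≠ v → pr (pidx u v) = (u, v) ∨ pr (pidx u v) = (v, u) := by
  decide

/-! ### Bool-level computations -/

def adjFB (g : Fin 15 → Bool) (u v : Fin 6) : Bool := (u.val != v.val) && g (pidx u v)

def degC (g : Fin 15 → Bool) (v : Fin 6) : ℕ :=
  cond (adjFB g v 0) 1 0 + cond (adjFB g v 1) 1 0 + cond (adjFB g v 2) 1 0 +
  cond (adjFB g v 3) 1 0 + cond (adjFB g v 4) 1 0 + cond (adjFB g v 5) 1 0

def degsB (g : Fin 15 → Bool) : List ℕ :=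
  [degC g 0, degC g 1, degC g 2, degC g 3, degC g 4, degC g 5]

def cnt6 (g : Fin 15 → Bool) (u v : Fin 6) : ℕ :=
  cond (adjFB g u 0 && adjFB g v 0) 1 0 + cond (adjFB g u 1 && adjFB g v 1) 1 0 +
  cond (adjFB g u 2 && adjFB g v 2) 1 0 + cond (adjFB g u 3 && adjFB g v 3) 1 0 +
  cond (adjFB g u 4 && adjFB g v 4) 1 0 + cond (adjFB g u 5 && adjFB g v 5) 1 0

def pairsF : List (Fin 6 × Fin 6) := prs

def hasKB (g : Fin 15 → Bool) : Bool :=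
  pairsF.any fun p => adjFB g p.1 p.2 && Nat.ble 3 (cnt6 g p.1 p.2)

def gW : Fin 15 → Bool := fun i => !(i.val == 1 || i.val == 2 || i.val == 13 || i.val == 14)

def checkB (g : Fin 15 → Bool) : Bool :=
  hasKB g || decide ((degsB g : Multiset ℕ) = Multiset.replicate 6 4)
    || decide ((degsB g : Multiset ℕ) = ([4, 4, 3, 4, 4, 3] : List ℕ))

/-! ### Nat-mask world -/

def bitN (m i : ℕ) : ℕ := m / i % 2

def popA (m : ℕ) : ℕ :=
  bitN m 1 + bitN m 2 + bitN m 4 + bitN m 8 + bitN m 16 + bitN m 32 + bitN m 64 + bitN m 128 +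
  bitN m 256 + bitN m 512 + bitN m 1024 + bitN m 2048 + bitN m 4096 + bitN m 8192 + bitN m 16384

def gOf (m : ℕ) : Fin 15 → Bool := fun i => bitN m (2 ^ i.val) == 1

def checkM (m : ℕ) : Bool := !(Nat.ble 11 (popA m)) || checkB (gOf m)

set_option maxRecDepth 10000 in
set_option maxHeartbeats 12000000 in
lemma key' : ∀ a ∈ List.range 256, ∀ b ∈ List.range 128, checkM (a * 128 + b) = true := by
  decide +kernel

/-! ### Mask of a Bool assignment -/

def Ml : List Bool → ℕ
  | [] => 0
  | b :: l => cond b 1 0 + 2 * Ml l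

def M (g : Fin 15 → Bool) : ℕ := Ml (List.ofFn g)

lemma Ml_lt : ∀ l : List Bool, Ml l < 2 ^ l.length := by
  intro l
  induction l with
  | nil => simp [Ml]
  | cons b l ih =>
    simp only [Ml, List.length_cons, pow_succ]
    cases b <;> simp <;> omega

lemma M_lt (g : Fin 15 → Bool) : M g < 32768 := by
  have h := Ml_lt (List.ofFn g)
  rw [List.length_ofFn] at h
  have h2 : (2 : ℕ) ^ 15 = 32768 := by norm_num
  rw [h2] at h
  exact h

lemma bit_Ml : ∀ (l : List Bool) (i : ℕ), bitN (Ml l) (2 ^ i) = cond (l.getD i false) 1 0 := by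
  intro l
  induction l with
  | nil => intro i; simp [Ml, bitN, Nat.zero_div]
  | cons b l ih =>
    intro i
    cases i with
    | zero =>
      simp only [Ml, bitN, pow_zero, Nat.div_one, List.getD_cons_zero]
      cases b <;> simp <;> omega
    | succ i =>
      have h2 : cond b 1 0 + 2 * Ml l = 2 * Ml l + cond b 1 0 := by omega
      simp only [Ml, bitN, pow_succ, List.getD_cons_succ]
      rw [show (2 : ℕ) ^ i * 2 = 2 * 2 ^ i by ring, ← Nat.div_div_eq_div_mul]
      have hb : (cond b 1 0 + 2 * Ml l) / 2 = Ml l := by cases b <;> simp <;> omega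
      rw [hb]
      exact ih i

lemma bit_M (g : Fin 15 → Bool) (i : Fin 15) : bitN (M g) (2 ^ i.val) = cond (g i) 1 0 := by
  rw [M, bit_Ml]
  congr 1
  rw [List.getD_eq_getElem _ _ (by simp [i.isLt])]
  rw [List.getElem_ofFn]

lemma gOf_M (g : Fin 15 → Bool) : gOf (M g) = g := by
  funext i
  simp only [gOf, bit_M]
  cases g i <;> simp

/-! ### Graph-side bridging -/

lemma adjFB_iff (g : Fin 15 → Bool) (u v : Fin 6) :
    (graphOf g).Adj u v ↔ adjFB g u v = true := by
  simp only [graphOf, adjFB, Bool.and_eq_true, bne_iff_ne, ne_eq]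
  constructor
  · rintro ⟨h1, h2⟩; exact ⟨fun hv => h1 (Fin.ext hv), h2⟩
  · rintro ⟨h1, h2⟩; exact ⟨fun hv => h1 (congrArg Fin.val hv), h2⟩

lemma ite_eq_cond (g : Fin 15 → Bool) (u v : Fin 6) :
    (if (graphOf g).Adj u v then (1 : ℕ) else 0) = cond (adjFB g u v) 1 0 := by
  by_cases h : (graphOf g).Adj u v
  · rw [if_pos h, (adjFB_iff g u v).mp h]
    rfl
  · rw [if_neg h]
    have hf : adjFB g u v = false := by
      cases hb : adjFB g u v
      · rfl
      · exact absurd ((adjFB_iff g u v).mpr hb) h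
    rw [hf]
    rfl

lemma deg_eq (g : Fin 15 → Bool) (v : Fin 6) : (graphOf g).degree v = degC g v := by
  rw [← card_neighborFinset_eq_degree, neighborFinset_eq_filter, Finset.card_filter,
    Fin.sum_univ_six]
  simp only [ite_eq_cond]
  rfl

lemma degMS_eq (g : Fin 15 → Bool) : degMS (graphOf g) = (degsB g : List ℕ) := by
  have huniv : (Finset.univ : Finset (Fin 6)).val = (([0,1,2,3,4,5] : List (Fin 6)) : Multiset (Fin 6)) := by decide
  rw [degMS, huniv]
  rw [Multiset.map_coe]
  simp only [List.map_cons, List.map_nil, deg_eq]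
  rfl

/-! ### ContainsKp11 from hasKB -/

lemma cnt6_eq (g : Fin 15 → Bool) (u v : Fin 6) :
    cnt6 g u v
      = ((Finset.univ : Finset (Fin 6)).filter
          (fun w => (graphOf g).Adj u w ∧ (graphOf g).Adj v w)).card := by
  rw [Finset.card_filter, Fin.sum_univ_six]
  have hterm : ∀ w : Fin 6,
      (if (graphOf g).Adj u w ∧ (graphOf g).Adj v w then (1 : ℕ) else 0)
        = cond (adjFB g u w && adjFB g v w) 1 0 := by
    intro w
    by_cases h : (graphOf g).Adj u w ∧ (graphOf g).Adj v w
    · rw [if_pos h, (adjFB_iff g u w).mp h.1, (adjFB_iff g v w).mp h.2]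
      rfl
    · rw [if_neg h]
      cases h1 : adjFB g u w
      · rfl
      · cases h2 : adjFB g v w
        · rfl
        · exact absurd ⟨(adjFB_iff g u w).mpr h1, (adjFB_iff g v w).mpr h2⟩ h
  simp only [hterm]
  rfl

lemma K_of (g : Fin 15 → Bool) (u v : Fin 6) (ha : adjFB g u v = true)
    (hc : 3 ≤ cnt6 g u v) : ContainsKp11 (graphOf g) 3 := by
  rw [cnt6_eq] at hc
  obtain ⟨s, hs_sub, hs_card⟩ := Finset.exists_subset_card_eq hc
  refine ⟨u, v, (adjFB_iff g u v).mpr ha, s, hs_card, ?_, ?_, ?_⟩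
  · intro hu
    have := Finset.mem_filter.mp (hs_sub hu)
    exact (graphOf g).loopless.irrefl u this.2.1
  · intro hv
    have := Finset.mem_filter.mp (hs_sub hv)
    exact (graphOf g).loopless.irrefl v this.2.2
  · intro w hw
    have := Finset.mem_filter.mp (hs_sub hw)
    exact this.2

lemma contains_of_hasKB (g : Fin 15 → Bool) (h : hasKB g = true) :
    ContainsKp11 (graphOf g) 3 := by
  obtain ⟨p, _, hcond⟩ := List.any_eq_true.mp h
  obtain ⟨h1, h2⟩ := Bool.and_eq_true_iff.mp hcond
  exact K_of g p.1 p.2 h1 (Nat.le_of_ble_eq_true h2)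

/-! ### handshake -/

def popB (g : Fin 15 → Bool) : ℕ :=
  cond (g 0) 1 0 + cond (g 1) 1 0 + cond (g 2) 1 0 + cond (g 3) 1 0 + cond (g 4) 1 0 +
  cond (g 5) 1 0 + cond (g 6) 1 0 + cond (g 7) 1 0 + cond (g 8) 1 0 + cond (g 9) 1 0 +
  cond (g 10) 1 0 + cond (g 11) 1 0 + cond (g 12) 1 0 + cond (g 13) 1 0 + cond (g 14) 1 0

lemma handshake (g : Fin 15 → Bool) : (degsB g).sum = 2 * popB g := by
  simp only [degsB, degC, popB, List.sum_cons, List.sum_nil,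
    show adjFB g 0 0 = false from rfl,
    show adjFB g 0 1 = g 0 from rfl,
    show adjFB g 0 2 = g 1 from rfl,
    show adjFB g 0 3 = g 3 from rfl,
    show adjFB g 0 4 = g 6 from rfl,
    show adjFB g 0 5 = g 10 from rfl,
    show adjFB g 1 0 = g 0 from rfl,
    show adjFB g 1 1 = false from rfl,
    show adjFB g 1 2 = g 2 from rfl,
    show adjFB g 1 3 = g 4 from rfl,
    show adjFB g 1 4 = g 7 from rfl,
    show adjFB g 1 5 = g 11 from rfl,
    show adjFB g 2 0 = g 1 from rfl,
    show adjFB g 2 1 = g 2 from rfl,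
    show adjFB g 2 2 = false from rfl,
    show adjFB g 2 3 = g 5 from rfl,
    show adjFB g 2 4 = g 8 from rfl,
    show adjFB g 2 5 = g 12 from rfl,
    show adjFB g 3 0 = g 3 from rfl,
    show adjFB g 3 1 = g 4 from rfl,
    show adjFB g 3 2 = g 5 from rfl,
    show adjFB g 3 3 = false from rfl,
    show adjFB g 3 4 = g 9 from rfl,
    show adjFB g 3 5 = g 13 from rfl,
    show adjFB g 4 0 = g 6 from rfl,
    show adjFB g 4 1 = g 7 from rfl,
    show adjFB g 4 2 = g 8 from rfl,
    show adjFB g 4 3 = g 9 from rfl,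
    show adjFB g 4 4 = false from rfl,
    show adjFB g 4 5 = g 14 from rfl,
    show adjFB g 5 0 = g 10 from rfl,
    show adjFB g 5 1 = g 11 from rfl,
    show adjFB g 5 2 = g 12 from rfl,
    show adjFB g 5 3 = g 13 from rfl,
    show adjFB g 5 4 = g 14 from rfl,
    show adjFB g 5 5 = false from rfl]
  simp only [Bool.cond_false]
  omega

lemma popA_M (g : Fin 15 → Bool) : popA (M g) = popB g := by
  simp only [popA, popB, show bitN (M g) 1 = cond (g 0) 1 0 from bit_M g 0, show bitN (M g) 2 = cond (g 1) 1 0 from bit_M g 1, show bitN (M g) 4 = cond (g 2) 1 0 from bit_M g 2, show bitN (M g) 8 = cond (g 3) 1 0 from bit_M g 3, show bitN (M g) 16 = cond (g 4) 1 0 from bit_M g 4, show bitN (M g) 32 = cond (g 5) 1 0 from bit_M g 5, show bitN (M g) 64 = cond (g 6) 1 0 from bit_M g 6, show bitN (M g) 128 = cond (g 7) 1 0 from bit_M g 7, show bitN (M g) 256 = cond (g 8) 1 0 from bit_M g 8, show bitN (M g) 512 = cond (g 9) 1 0 from bit_M g 9, show bitN (M g) 1024 = cond (g 10) 1 0 from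 bit_M g 10, show bitN (M g) 2048 = cond (g 11) 1 0 from bit_M g 11, show bitN (M g) 4096 = cond (g 12) 1 0 from bit_M g 12, show bitN (M g) 8192 = cond (g 13) 1 0 from bit_M g 13, show bitN (M g) 16384 = cond (g 14) 1 0 from bit_M g 14]

/-! ### instance transport -/

lemma degMS_congr {G H : SimpleGraph (Fin 6)} [iG : DecidableRel G.Adj]
    [iH : DecidableRel H.Adj] (h : G = H) : degMS G = degMS H := by
  subst h
  obtain rfl : iG = iH := Subsingleton.elim _ _
  rfl

theorem stmt_11 (S : Multiset ℕ) (hcard : S.card = 6)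
    (hgraphical : ∃ (G : SimpleGraph (Fin 6)) (_ : DecidableRel G.Adj), degMS G = S)
    (hsum : 22 ≤ S.sum) :
    (∃ (G : SimpleGraph (Fin 6)) (_ : DecidableRel G.Adj),
        degMS G = S ∧ ContainsKp11 G 3) ∨ S = Multiset.replicate 6 4 := by
  obtain ⟨G, inst, hG⟩ := hgraphical
  -- encode G
  set g : Fin 15 → Bool := fun i => decide (G.Adj (pr i).1 (pr i).2) with hgdef
  have hGg : graphOf g = G := by
    ext u v
    constructor
    · rintro ⟨hne, hb⟩
      have hb' : G.Adj (pr (pidx u v)).1 (pr (pidx u v)).2 := of_decide_eq_true hb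
      rcases pr_pidx u v hne with h | h <;> rw [h] at hb'
      · exact hb'
      · exact hb'.symm
    · intro h
      refine ⟨G.ne_of_adj h, ?_⟩
      rcases pr_pidx u v (G.ne_of_adj h) with hh | hh <;>
        · rw [hgdef]
          simp only [hh]
          exact decide_eq_true (by first | exact h | exact h.symm)
  have hS : degMS (graphOf g) = S := by
    rw [← hG]; exact degMS_congr hGg
  have hSdegs : ((degsB g : List ℕ) : Multiset ℕ) = S := by rw [← degMS_eq, hS]
  -- popcount bound
  have hsum' : 22 ≤ (degsB g).sum := by
    have : S.sum = (degsB g).sum := by rw [← hSdegs]; simp [Multiset.sum_coe]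
    omega
  have hpop : 11 ≤ popA (M g) := by
    rw [popA_M]
    have := handshake g
    omega
  -- apply key'
  have hmem1 : M g / 128 ∈ List.range 256 := by
    rw [List.mem_range]
    have := M_lt g
    omega
  have hmem2 : M g % 128 ∈ List.range 128 := by
    rw [List.mem_range]
    omega
  have hkey := key' _ hmem1 _ hmem2
  rw [show M g / 128 * 128 + M g % 128 = M g by omega] at hkey
  rw [checkM, gOf_M] at hkey
  have hble : Nat.ble 11 (popA (M g)) = true := by
    rw [Nat.ble_eq]
    exact hpop
  rw [hble, Bool.not_true, Bool.false_or] at hkey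
  simp only [checkB, Bool.or_eq_true, decide_eq_true_eq] at hkey
  rcases hkey with (hk | hrep) | hwit
  · -- realization g itself contains K_{3,1,1}
    exact Or.inl ⟨graphOf g, graphOfDec g, hS, contains_of_hasKB g hk⟩
  · right
    rw [← hSdegs, hrep]
  · -- use the witness graph gW
    left
    refine ⟨graphOf gW, graphOfDec gW, ?_, ?_⟩
    · rw [degMS_eq, ← hSdegs, hwit]
      decide
    · unfold ContainsKp11
      exact ⟨3, 4, by decide, ({0, 1, 2} : Finset (Fin 6)), by decide, by decide, by decide,
        by decide⟩
end

section
/- The graphical sequences (5,5,3,3,3,3), (5,4,4,3,3,3), and (4,4,4,4,3,3) are each potentially K_{3,1,1}-graphic: each has a realization on 6 vertices containing K_{3,1,1} as a subgraph. -/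
open SimpleGraph Finset

def mkG (L : List (Fin 6 × Fin 6)) : SimpleGraph (Fin 6) :=
  SimpleGraph.fromRel (fun a b => (a, b) ∈ L)

instance mkG.adjDec (L : List (Fin 6 × Fin 6)) : DecidableRel (mkG L).Adj := by
  unfold mkG SimpleGraph.fromRel
  intro a b
  exact inferInstanceAs (Decidable (_ ∧ _))

def L1 : List (Fin 6 × Fin 6) :=
  [(0,1),(0,2),(0,3),(0,4),(0,5),(1,2),(1,3),(1,4),(1,5),(2,3),(4,5)]

def L2 : List (Fin 6 × Fin 6) :=
  [(0,1),(0,2),(0,3),(0,4),(0,5),(1,2),(1,3),(1,4),(2,3),(2,5),(4,5)]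

def L3 : List (Fin 6 × Fin 6) :=
  [(0,1),(0,2),(0,3),(0,4),(1,2),(1,3),(1,4),(2,5),(3,5),(4,5),(2,3)]

theorem stmt_16 :
    (∃ (G : SimpleGraph (Fin 6)) (_ : DecidableRel G.Adj),
      degMS G = ({5, 5, 3, 3, 3, 3} : Multiset ℕ) ∧ ContainsKp11 G 3) ∧
    (∃ (G : SimpleGraph (Fin 6)) (_ : DecidableRel G.Adj),
      degMS G = ({5, 4, 4, 3, 3, 3} : Multiset ℕ) ∧ ContainsKp11 G 3) ∧
    (∃ (G : SimpleGraph (Fin 6)) (_ : DecidableRel G.Adj),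
      degMS G = ({4, 4, 4, 4, 3, 3} : Multiset ℕ) ∧ ContainsKp11 G 3) := by
  refine ⟨⟨mkG L1, mkG.adjDec L1, by decide, 0, 1, by decide, {2,3,4}, by decide, by decide, by decide, by decide⟩,
         ⟨mkG L2, mkG.adjDec L2, by decide, 0, 1, by decide, {2,3,4}, by decide, by decide, by decide, by decide⟩,
         ⟨mkG L3, mkG.adjDec L3, by decide, 0, 1, by decide, {2,3,4}, by decide, by decide, by decide, by decide⟩⟩
end

section
/- If G is a simple graph on n ≥ 8 vertices with minimum degree at least 3 and degree sum at least 4n − 2 that contains K_4 on its four vertices of highest degree, and G does not contain K_{3,1,1}, then one can perform an edge interchange (remove three edges, insert three edges preserving all degrees) to obtain a graph G′ with the same degree sequence containing K_{3,1,1}. -/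
open SimpleGraph Finset

/-!
Let `s` be the four top-degree vertices spanning `K_4`. As `G` has no `K_{3,1,1}`, no vertex
outside `s` is adjacent to two vertices of `s`. The degree sum forces two vertices `a, b ∈ s` of
degree at least `4`, so they have neighbours `w` and `x` outside `s`, necessarily distinct; let
`t ∉ {a, x}` be a further neighbour of `w` and write `s = {a, b, y, z}` with `z` not adjacent to
`t`. Then `b x y z t w` is an alternating cycle, and trading its edges `bx, yz, tw` for the
non-edges `xy, zt, wb` preserves all degrees and makes `y, z, w` common neighbours of `a` and `b`.
-/

namespace SimpleGraph

variable {V : Type*}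

def interchange (G : SimpleGraph V) (R A : Finset (Sym2 V)) : SimpleGraph V :=
  fromEdgeSet ((G.edgeSet \ R) ∪ A)

section Interchange

variable {G : SimpleGraph V} {R A : Finset (Sym2 V)}

theorem interchange_adj {u v : V} :
    (G.interchange R A).Adj u v ↔ (G.Adj u v ∧ s(u, v) ∉ R ∨ s(u, v) ∈ A) ∧ u ≠ v := by
  rw [interchange, fromEdgeSet_adj]
  simp only [Set.mem_union, Set.mem_sdiff, mem_edgeSet, mem_coe]

theorem interchange_adj_of_adj {u v : V} (h : G.Adj u v) (hR : s(u, v) ∉ R) :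
    (G.interchange R A).Adj u v :=
  interchange_adj.2 ⟨.inl ⟨h, hR⟩, h.ne⟩

theorem interchange_adj_of_mem {u v : V} (hA : s(u, v) ∈ A) (huv : u ≠ v) :
    (G.interchange R A).Adj u v :=
  interchange_adj.2 ⟨.inr hA, huv⟩

variable [Fintype V] [DecidableEq V] [DecidableRel G.Adj] [DecidableRel (G.interchange R A).Adj]

theorem edgeFinset_interchange (hA : ∀ e ∈ A, ¬e.IsDiag) :
    (G.interchange R A).edgeFinset = (G.edgeFinset \ R) ∪ A := by
  apply coe_injective
  ext e
  induction e using Sym2.ind with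
  | _ u v =>
    simp only [coe_edgeFinset, mem_edgeSet, interchange_adj, coe_union, coe_sdiff,
      Set.mem_union, Set.mem_sdiff, mem_coe]
    constructor
    · rintro ⟨h | h, -⟩
      exacts [.inl ⟨h.1, h.2⟩, .inr h]
    · rintro (⟨h, hR⟩ | h)
      · exact ⟨.inl ⟨h, hR⟩, h.ne⟩
      · exact ⟨.inr h, fun huv => hA _ h (Sym2.mk_isDiag_iff.2 huv)⟩

theorem degree_interchange_add (hR : R ⊆ G.edgeFinset) (hAG : Disjoint A G.edgeFinset)
    (hA : ∀ e ∈ A, ¬e.IsDiag) (v : V) :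
    (G.interchange R A).degree v + #{e ∈ R | v ∈ e} = G.degree v + #{e ∈ A | v ∈ e} := by
  rw [← card_incidenceFinset_eq_degree, ← card_incidenceFinset_eq_degree,
    incidenceFinset_eq_filter, incidenceFinset_eq_filter, edgeFinset_interchange hA,
    filter_union, card_union_of_disjoint (disjoint_filter_filter
      (hAG.symm.mono_left sdiff_subset)), add_right_comm]
  congr 1
  rw [← card_sdiff_add_card_eq_card (filter_subset_filter _ hR)]
  congr 2
  ext e
  simp only [mem_filter, mem_sdiff]
  tauto

end Interchange

section SixCycle

variable [DecidableEq V]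

theorem card_sym2_triple {p₁ q₁ p₂ q₂ p₃ q₃ : V} (h : [p₁, q₁, p₂, q₂, p₃, q₃].Nodup) :
    #({s(p₁, q₁), s(p₂, q₂), s(p₃, q₃)} : Finset (Sym2 V)) = 3 := by
  simp only [List.nodup_cons, List.mem_cons, List.not_mem_nil, or_false] at h
  rw [card_insert_of_notMem (by grind [Sym2.eq_iff]),
    card_insert_of_notMem (by grind [Sym2.eq_iff]), card_singleton]

theorem card_filter_mem_sym2_triple {p₁ q₁ p₂ q₂ p₃ q₃ : V}
    (h : [p₁, q₁, p₂, q₂, p₃, q₃].Nodup) (v : V) :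
    #{e ∈ ({s(p₁, q₁), s(p₂, q₂), s(p₃, q₃)} : Finset (Sym2 V)) | v ∈ e} =
      [p₁, q₁, p₂, q₂, p₃, q₃].count v := by
  simp only [List.nodup_cons, List.mem_cons, List.not_mem_nil, or_false] at h
  rw [card_filter, sum_insert (by grind [Sym2.eq_iff]), sum_insert (by grind [Sym2.eq_iff]),
    sum_singleton]
  simp only [Sym2.mem_iff, List.count_cons, List.count_nil, beq_iff_eq]
  grind

variable {G : SimpleGraph V} {b x y z t w : V}

theorem interchange_sixCycle [Fintype V] [DecidableRel G.Adj] (hc : [b, x, y, z, t, w].Nodup)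
    (hbx : G.Adj b x) (hyz : G.Adj y z) (htw : G.Adj t w)
    (hxy : ¬G.Adj x y) (hzt : ¬G.Adj z t) (hwb : ¬G.Adj w b)
    [DecidableRel (G.interchange {s(b, x), s(y, z), s(t, w)} {s(x, y), s(z, t), s(w, b)}).Adj] :
    #({s(b, x), s(y, z), s(t, w)} : Finset (Sym2 V)) = 3 ∧
    #({s(x, y), s(z, t), s(w, b)} : Finset (Sym2 V)) = 3 ∧
    {s(b, x), s(y, z), s(t, w)} ⊆ G.edgeFinset ∧
    Disjoint {s(x, y), s(z, t), s(w, b)} G.edgeFinset ∧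
    (G.interchange {s(b, x), s(y, z), s(t, w)} {s(x, y), s(z, t), s(w, b)}).edgeFinset =
      (G.edgeFinset \ {s(b, x), s(y, z), s(t, w)}) ∪ {s(x, y), s(z, t), s(w, b)} ∧
    ∀ v, (G.interchange {s(b, x), s(y, z), s(t, w)} {s(x, y), s(z, t), s(w, b)}).degree v =
      G.degree v := by
  have hperm : [x, y, z, t, w, b].Perm [b, x, y, z, t, w] :=
    List.rotate_perm [b, x, y, z, t, w] 1
  have hc' : [x, y, z, t, w, b].Nodup := hperm.nodup_iff.2 hc
  have hA : ∀ e ∈ ({s(x, y), s(z, t), s(w, b)} : Finset (Sym2 V)), ¬e.IsDiag := by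
    simp only [List.nodup_cons, List.mem_cons, List.not_mem_nil, or_false] at hc'
    grind [Sym2.mk_isDiag_iff]
  have hR : {s(b, x), s(y, z), s(t, w)} ⊆ G.edgeFinset := by
    simp [insert_subset_iff, hbx, hyz, htw]
  have hAG : Disjoint {s(x, y), s(z, t), s(w, b)} G.edgeFinset := by
    simp [hxy, hzt, hwb]
  refine ⟨card_sym2_triple hc, card_sym2_triple hc', hR, hAG, edgeFinset_interchange hA,
    fun v => ?_⟩
  -- Both triples are perfect matchings of the same six vertices.
  have := degree_interchange_add hR hAG hA v
  rw [card_filter_mem_sym2_triple hc, card_filter_mem_sym2_triple hc', hperm.count_eq v] at this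
  omega

theorem containsKp11_interchange_sixCycle {a : V} (hc : [a, b, x, y, z, t, w].Nodup)
    (hab : G.Adj a b) (hay : G.Adj a y) (haz : G.Adj a z) (haw : G.Adj a w)
    (hby : G.Adj b y) (hbz : G.Adj b z) :
    ContainsKp11 (G.interchange {s(b, x), s(y, z), s(t, w)} {s(x, y), s(z, t), s(w, b)}) 3 := by
  simp only [List.nodup_cons, List.mem_cons, List.not_mem_nil, or_false] at hc
  refine ⟨a, b, interchange_adj_of_adj hab (by grind [Sym2.eq_iff]), {y, z, w},
    card_eq_three.2 ⟨y, z, w, by grind, by grind, by grind, rfl⟩, by grind, by grind, ?_⟩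
  simp only [mem_insert, mem_singleton, forall_eq_or_imp, forall_eq]
  refine ⟨⟨?_, ?_⟩, ⟨?_, ?_⟩, ?_, interchange_adj_of_mem (by simp) (by grind)⟩ <;>
    exact interchange_adj_of_adj ‹_› (by grind [Sym2.eq_iff])

end SixCycle

section Degree

variable [Fintype V] {G : SimpleGraph V} [DecidableRel G.Adj]

theorem exists_ne_four_le_degree [DecidableEq V] [Nonempty V]
    (h : 4 * Fintype.card V - 2 ≤ ∑ v, G.degree v) :
    ∃ a b, a ≠ b ∧ 4 ≤ G.degree a ∧ 4 ≤ G.degree b := by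
  by_contra! hlow
  obtain ⟨a, ha⟩ : ∃ a, ∀ v ≠ a, G.degree v ≤ 3 := by
    by_cases hhigh : ∃ a, 4 ≤ G.degree a
    · obtain ⟨a, ha⟩ := hhigh
      exact ⟨a, fun v hv => Nat.le_of_lt_succ (hlow a v hv.symm ha)⟩
    · push Not at hhigh
      exact ⟨Classical.arbitrary V, fun v _ => Nat.le_of_lt_succ (hhigh v)⟩
  have hrest : ∑ v ∈ univ.erase a, G.degree v ≤ (Fintype.card V - 1) * 3 := by
    simpa [card_erase_of_mem] using
      sum_le_card_nsmul (univ.erase a) _ 3 fun v hv => ha v (ne_of_mem_erase hv)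
  rw [← add_sum_erase _ _ (mem_univ a)] at h
  have := G.degree_lt_card_verts a
  omega

theorem exists_mem_ne_le_degree_of_top {s : Finset V} {k : ℕ} (hs : 1 < #s)
    (htop : ∀ u ∈ s, ∀ v ∉ s, G.degree v ≤ G.degree u)
    (h : ∃ a b, a ≠ b ∧ k ≤ G.degree a ∧ k ≤ G.degree b) :
    ∃ a ∈ s, ∃ b ∈ s, a ≠ b ∧ k ≤ G.degree a ∧ k ≤ G.degree b := by
  obtain ⟨a, b, hab, ha, hb⟩ := h
  by_cases hin : a ∈ s ∧ b ∈ s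
  · exact ⟨a, hin.1, b, hin.2, hab, ha, hb⟩
  obtain ⟨c, hcs, hc⟩ : ∃ c ∉ s, k ≤ G.degree c := by
    by_cases has : a ∈ s
    · exact ⟨b, fun hbs => hin ⟨has, hbs⟩, hb⟩
    · exact ⟨a, has, ha⟩
  obtain ⟨u, hu, v, hv, huv⟩ := one_lt_card.1 hs
  exact ⟨u, hu, v, hv, huv, hc.trans (htop u hu c hcs), hc.trans (htop v hv c hcs)⟩

theorem exists_adj_notMem_of_card_le_degree [DecidableEq V] {s : Finset V} {u : V}
    (hu : u ∈ s) (h : #s ≤ G.degree u) : ∃ w ∉ s, G.Adj u w := by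
  by_contra! hs
  have hsub : G.neighborFinset u ⊆ s.erase u := fun w hw => by
    rw [mem_neighborFinset] at hw
    exact mem_erase.2 ⟨hw.ne', by_contra fun hws => hs w hws hw⟩
  have hle := card_le_card hsub
  rw [card_erase_of_mem hu, card_neighborFinset_eq_degree] at hle
  have := card_pos.2 ⟨u, hu⟩
  omega

end Degree

namespace IsNClique

variable [DecidableEq V] {G : SimpleGraph V} {s : Finset V}

theorem not_adj_of_adj {k : ℕ} (hs : G.IsNClique (k + 1) s)
    (hno : ¬ContainsKp11 G k) {u v p : V} (hu : u ∈ s) (hv : v ∈ s) (huv : u ≠ v)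
    (hp : p ∉ s) (hup : G.Adj u p) : ¬G.Adj v p := by
  intro hvp
  have hcard : #((s.erase u).erase v) + 2 = k + 1 := by
    rw [card_erase_of_mem (mem_erase.2 ⟨huv.symm, hv⟩), card_erase_of_mem hu, hs.card_eq]
    have := hs.card_eq ▸ one_lt_card.2 ⟨u, hu, v, hv, huv⟩
    omega
  refine hno ⟨u, v, hs.1 hu hv huv, insert p ((s.erase u).erase v), ?_, ?_, ?_, ?_⟩
  · rw [card_insert_of_notMem fun h => hp (mem_of_mem_erase (mem_of_mem_erase h))]
    omega
  · simp only [mem_insert, mem_erase]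
    grind
  · simp only [mem_insert, mem_erase]
    grind
  · simp only [mem_insert, mem_erase, forall_eq_or_imp]
    exact ⟨⟨hup, hvp⟩, fun q ⟨hqv, hqu, hq⟩ =>
      ⟨hs.1 hu hq (Ne.symm hqu), hs.1 hv hq (Ne.symm hqv)⟩⟩

theorem exists_alternating_sixCycle [Fintype V] [DecidableRel G.Adj] (hs : G.IsNClique 4 s)
    (hno : ¬ContainsKp11 G 3) (hmin : ∀ v, 3 ≤ G.degree v) {a b : V} (ha : a ∈ s) (hb : b ∈ s)
    (hab : a ≠ b) (hda : 4 ≤ G.degree a) (hdb : 4 ≤ G.degree b) :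
    ∃ x y z t w, [a, b, x, y, z, t, w].Nodup ∧
      G.Adj a y ∧ G.Adj a z ∧ G.Adj a w ∧ G.Adj b y ∧ G.Adj b z ∧
      G.Adj b x ∧ G.Adj y z ∧ G.Adj t w ∧ ¬G.Adj x y ∧ ¬G.Adj z t ∧ ¬G.Adj w b := by
  obtain ⟨w, hws, haw⟩ := exists_adj_notMem_of_card_le_degree ha (hs.card_eq ▸ hda)
  obtain ⟨x, hxs, hbx⟩ := exists_adj_notMem_of_card_le_degree hb (hs.card_eq ▸ hdb)
  obtain ⟨t, ht, hwt⟩ := exists_adj_notMem_of_card_le_degree (s := {w, a, x})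
    (mem_insert_self _ _) (card_le_three.trans (hmin w))
  have hax : ¬G.Adj a x := hs.not_adj_of_adj hno hb ha hab.symm hxs hbx
  simp only [mem_insert, mem_singleton, not_or] at ht
  have hts : t ∉ s := fun hts =>
    hs.not_adj_of_adj hno ha hts (Ne.symm ht.2.1) hws haw hwt.symm
  have hcd : #((s.erase a).erase b) = 2 := by
    rw [card_erase_of_mem (mem_erase.2 ⟨hab.symm, hb⟩), card_erase_of_mem ha, hs.card_eq]
  obtain ⟨c, d, hcd, hcdeq⟩ := card_eq_two.1 hcd
  have hc : c ∈ (s.erase a).erase b := hcdeq ▸ mem_insert_self c {d}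
  have hd : d ∈ (s.erase a).erase b := hcdeq ▸ mem_insert_of_mem (mem_singleton_self d)
  simp only [mem_erase] at hc hd
  obtain ⟨y, z, ⟨hyb, hya, hys⟩, ⟨hzb, hza, hzs⟩, hyz, hzt⟩ : ∃ y z,
      (y ≠ b ∧ y ≠ a ∧ y ∈ s) ∧ (z ≠ b ∧ z ≠ a ∧ z ∈ s) ∧ y ≠ z ∧ ¬G.Adj z t := by
    by_cases hdt : G.Adj d t
    · exact ⟨d, c, hd, hc, hcd.symm, hs.not_adj_of_adj hno hd.2.2 hc.2.2 hcd.symm hts hdt⟩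
    · exact ⟨c, d, hc, hd, hcd, hdt⟩
  refine ⟨x, y, z, t, w, ?_, hs.1 ha hys hya.symm, hs.1 ha hzs hza.symm, haw,
    hs.1 hb hys hyb.symm, hs.1 hb hzs hzb.symm, hbx, hs.1 hys hzs hyz, hwt.symm,
    hs.not_adj_of_adj hno hb hys hyb.symm hxs hbx ∘ .symm, hzt,
    hs.not_adj_of_adj hno ha hb hab hws haw ∘ .symm⟩
  have hxw : x ≠ w := fun h => hax (h ▸ haw)
  obtain ⟨-, hta, htx⟩ := ht
  simp only [List.nodup_cons, List.mem_cons, List.not_mem_nil, or_false, not_or,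
    not_false_eq_true, List.nodup_nil, and_true]
  and_intros <;> rintro rfl <;> first | contradiction | exact G.irrefl ‹_›

end IsNClique

end SimpleGraph

theorem stmt_18_general (n : ℕ) (G : SimpleGraph (Fin n))
    (instG : DecidableRel G.Adj)
    (hmin : ∀ v, 3 ≤ G.degree v)
    (hsum : 4 * n - 2 ≤ ∑ v, G.degree v)
    (hK4 : ∃ s : Finset (Fin n), s.card = 4 ∧
      (∀ u ∈ s, ∀ v : Fin n, v ∉ s → G.degree v ≤ G.degree u) ∧
      ∀ u ∈ s, ∀ v ∈ s, u ≠ v → G.Adj u v)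
    (hno : ¬ ContainsKp11 G 3) :
    ∃ (G' : SimpleGraph (Fin n)) (instG' : DecidableRel G'.Adj)
      (R A : Finset (Sym2 (Fin n))),
      R.card = 3 ∧ A.card = 3 ∧ R ⊆ G.edgeFinset ∧ Disjoint A G.edgeFinset ∧
      G'.edgeFinset = (G.edgeFinset \ R) ∪ A ∧
      (∀ v, G'.degree v = G.degree v) ∧ ContainsKp11 G' 3 := by
  obtain ⟨s, hs4, htop, hclique⟩ := hK4
  have hs : G.IsNClique 4 s := ⟨hclique, hs4⟩
  have : Nonempty (Fin n) := ⟨(card_pos.1 (by omega : 0 < #s)).choose⟩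
  obtain ⟨a, ha, b, hb, hab, hda, hdb⟩ := exists_mem_ne_le_degree_of_top (by omega) htop
    (exists_ne_four_le_degree (by simpa using hsum))
  obtain ⟨x, y, z, t, w, hc, hay, haz, haw, hby, hbz, hbx, hyz, htw, hxy, hzt, hwb⟩ :=
    hs.exists_alternating_sixCycle hno hmin ha hb hab hda hdb
  classical
  obtain ⟨hR, hA, hRG, hAG, hE, hdeg⟩ :=
    interchange_sixCycle (List.nodup_cons.1 hc).2 hbx hyz htw hxy hzt hwb
  exact ⟨_, inferInstance, _, _, hR, hA, hRG, hAG, hE, hdeg,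
    containsKp11_interchange_sixCycle hc (hs.1 ha hb hab) hay haz haw hby hbz⟩

theorem stmt_18 (n : ℕ) (hn : 8 ≤ n) (G : SimpleGraph (Fin n))
    (instG : DecidableRel G.Adj)
    (hmin : ∀ v, 3 ≤ G.degree v)
    (hsum : 4 * n - 2 ≤ ∑ v, G.degree v)
    (hK4 : ∃ s : Finset (Fin n), s.card = 4 ∧
      (∀ u ∈ s, ∀ v : Fin n, v ∉ s → G.degree v ≤ G.degree u) ∧
      ∀ u ∈ s, ∀ v ∈ s, u ≠ v → G.Adj u v)
    (hno : ¬ ContainsKp11 G 3) :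
    ∃ (G' : SimpleGraph (Fin n)) (instG' : DecidableRel G'.Adj)
      (R A : Finset (Sym2 (Fin n))),
      R.card = 3 ∧ A.card = 3 ∧ R ⊆ G.edgeFinset ∧ Disjoint A G.edgeFinset ∧
      G'.edgeFinset = (G.edgeFinset \ R) ∪ A ∧
      (∀ v, G'.degree v = G.degree v) ∧ ContainsKp11 G' 3 :=
  stmt_18_general n G instG hmin hsum hK4 hno
end
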